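/- arXiv:0906.2896 — 7 statements merged into one kernel-verified Lean document; each statement's English description precedes it below -/
import Mathlib

section
/- Let X be a T0 topological space and Y a T1 topological space. If g₁, g₂ : X^c → Y are continuous functions satisfying g₁(closure{x}) = g₂(closure{x}) for every x ∈ X, then g₁ = g₂. In particular, the continuous extension to X^c of a continuous function f : X → Y is unique. -/
/-- A nonempty closed subset `S` of a topological space is *prime* if whenever
`S = F₁ ∪ F₂` with `F₁`, `F₂` closed, then `S = F₁` or `S = F₂`. -/
def IsPrimeClosed {X : Type*} [TopologicalSpace X] (S : Set X) : Prop :=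
  IsClosed S ∧ S.Nonempty ∧
    ∀ F₁ F₂ : Set X, IsClosed F₁ → IsClosed F₂ → S = F₁ ∪ F₂ → S = F₁ ∨ S = F₂

/-- The lower Vietoris topology on `Set X`, generated by the families
`{F | F ∩ U ≠ ∅}` for `U` open in `X`. -/
def lowerVietoris (X : Type*) [TopologicalSpace X] : TopologicalSpace (Set X) :=
  TopologicalSpace.generateFrom
    {V : Set (Set X) | ∃ U : Set X, IsOpen U ∧ V = {F : Set X | (F ∩ U).Nonempty}}

/-- The point-complete envelope `X^c`: the space of all closed prime subsets of `X`,
with the subspace topology inherited from the lower Vietoris topology. -/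
def PrimeClosedEnv (X : Type*) [TopologicalSpace X] : Type _ :=
  {S : Set X // IsPrimeClosed S}

instance (X : Type*) [TopologicalSpace X] : TopologicalSpace (PrimeClosedEnv X) :=
  TopologicalSpace.induced Subtype.val (lowerVietoris X)

theorem isPrimeClosed_closure_singleton {X : Type*} [TopologicalSpace X] (x : X) :
    IsPrimeClosed (closure ({x} : Set X)) := by
  refine ⟨isClosed_closure, ⟨x, subset_closure rfl⟩, ?_⟩
  intro F₁ F₂ h₁ h₂ hU
  have hx : x ∈ closure ({x} : Set X) := subset_closure rfl
  rw [hU] at hx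
  rcases hx with hx | hx
  · left
    apply Set.Subset.antisymm (closure_minimal (Set.singleton_subset_iff.mpr hx) h₁)
    rw [hU]; exact Set.subset_union_left
  · right
    apply Set.Subset.antisymm (closure_minimal (Set.singleton_subset_iff.mpr hx) h₂)
    rw [hU]; exact Set.subset_union_right

/-- The canonical map `x ↦ closure {x}` from `X` to its point-complete envelope. -/
def toEnv {X : Type*} [TopologicalSpace X] (x : X) : PrimeClosedEnv X :=
  ⟨closure {x}, isPrimeClosed_closure_singleton x⟩

/-! In the lower Vietoris topology a set specializes to every subset of its closure, so each
`S ∈ X^c` specializes to `closure {y}` for any `y ∈ S`. Continuous maps preserve specialization,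
and in a `T1` space specialization is equality, hence `gᵢ S = gᵢ (closure {y})`. -/

theorem lowerVietoris_specializes_of_subset_closure {X : Type*} [TopologicalSpace X]
    {A B : Set X} (h : B ⊆ closure A) : @Specializes (Set X) (lowerVietoris X) A B := by
  rw [@specializes_iff_nhds, lowerVietoris, TopologicalSpace.nhds_generateFrom,
    TopologicalSpace.nhds_generateFrom]
  refine le_iInf₂ fun V ⟨hB, U, hU, hV⟩ ↦ iInf₂_le V ⟨?_, U, hU, hV⟩
  subst hV
  exact (closure_inter_open_nonempty_iff hU).mp (hB.mono (Set.inter_subset_inter_left U h))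

namespace PrimeClosedEnv

variable {X : Type*} [TopologicalSpace X]

theorem isInducing_val :
    @Topology.IsInducing (PrimeClosedEnv X) (Set X) _ (lowerVietoris X) Subtype.val :=
  @Topology.IsInducing.mk _ _ _ (lowerVietoris X) _ rfl

theorem specializes_of_subset {S T : PrimeClosedEnv X} (h : T.1 ⊆ S.1) : S ⤳ T :=
  letI := lowerVietoris X
  isInducing_val.specializes_iff.mp
    (lowerVietoris_specializes_of_subset_closure (h.trans subset_closure))

theorem specializes_toEnv {S : PrimeClosedEnv X} {y : X} (hy : y ∈ S.1) : S ⤳ toEnv y :=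
  specializes_of_subset (closure_minimal (Set.singleton_subset_iff.mpr hy) S.2.1)

end PrimeClosedEnv

open PrimeClosedEnv in
theorem extension_to_env_unique_general {X Y : Type*} [TopologicalSpace X] [TopologicalSpace Y]
    [T1Space Y] (g₁ g₂ : PrimeClosedEnv X → Y)
    (hg₁ : Continuous g₁) (hg₂ : Continuous g₂)
    (h : ∀ x : X, g₁ (toEnv x) = g₂ (toEnv x)) : g₁ = g₂ := by
  funext S
  obtain ⟨y, hy⟩ := S.2.2.1
  have hS : S ⤳ toEnv y := specializes_toEnv hy
  rw [(hS.map hg₁).eq, (hS.map hg₂).eq, h y]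

/-- Continuous maps from `X^c` into a `T1` space agreeing on the canonical copy of the
`T0` space `X` are equal; the continuous extension to `X^c` is unique. -/
theorem extension_to_env_unique {X Y : Type*} [TopologicalSpace X] [TopologicalSpace Y]
    [T0Space X] [T1Space Y] (g₁ g₂ : PrimeClosedEnv X → Y)
    (hg₁ : Continuous g₁) (hg₂ : Continuous g₂)
    (h : ∀ x : X, g₁ (toEnv x) = g₂ (toEnv x)) : g₁ = g₂ :=
  extension_to_env_unique_general g₁ g₂ hg₁ hg₂ h
end

section
/- Let X be a T0 topological space. Then X^c is point-complete: every closed prime subset of the space X^c (taken with respect to the lower Vietoris subspace topology on X^c) is the closure in X^c of a singleton. -/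
/-!
Closed prime sets are exactly the closed irreducible ones. For an irreducible `A`, every lower
Vietoris neighbourhood of `A` contains a subbasic one `{F | (F ∩ U).Nonempty}` with `A ∩ U`
nonempty, because irreducibility lets finitely many such `U` be intersected. Hence `A` lies in
the closure of `S ⊆ X^c` iff `A ⊆ closure (⋃ S)`. A closed prime `S` is then the closure of the
single point `T = closure (⋃ S)`, which is irreducible because every member of `S` lies on one
side of a closed cover of `T` and `S` itself is irreducible.
-/

section

open Set Topology

variable {X : Type*} [TopologicalSpace X]

theorem isPrimeClosed_iff {S : Set X} : IsPrimeClosed S ↔ IsClosed S ∧ IsIrreducible S := by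
  rw [IsIrreducible, isPreirreducible_iff_isClosed_union_isClosed]
  refine ⟨fun ⟨hc, hne, hprime⟩ => ⟨hc, hne, fun F₁ F₂ h₁ h₂ hS => ?_⟩,
    fun ⟨hc, hne, hirr⟩ => ⟨hc, hne, fun F₁ F₂ h₁ h₂ hS => ?_⟩⟩
  · have hsplit : S = S ∩ F₁ ∪ S ∩ F₂ := by rw [← inter_union_distrib_left, inter_eq_left.2 hS]
    refine (hprime _ _ (hc.inter h₁) (hc.inter h₂) hsplit).imp ?_ ?_ <;>
      exact fun h => h ▸ inter_subset_right
  · refine (hirr F₁ F₂ h₁ h₂ hS.subset).imp ?_ ?_ <;> intro h <;> apply h.antisymm <;> rw [hS]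
    exacts [subset_union_left, subset_union_right]

theorem isOpen_lowerVietoris_setOf_inter_nonempty {U : Set X} (hU : IsOpen U) :
    IsOpen[lowerVietoris X] {F : Set X | (F ∩ U).Nonempty} :=
  TopologicalSpace.isOpen_generateFrom_of_mem ⟨U, hU, rfl⟩

theorem IsIrreducible.exists_setOf_inter_nonempty_subset {A : Set X} (hA : IsIrreducible A)
    {O : Set (Set X)} (hO : IsOpen[lowerVietoris X] O) (hAO : A ∈ O) :
    ∃ U, IsOpen U ∧ (A ∩ U).Nonempty ∧ {F : Set X | (F ∩ U).Nonempty} ⊆ O := by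
  induction hO with
  | basic V hV =>
    obtain ⟨U, hU, rfl⟩ := hV
    exact ⟨U, hU, hAO, subset_rfl⟩
  | univ => exact ⟨univ, isOpen_univ, by simpa using hA.nonempty, subset_univ _⟩
  | inter O₁ O₂ _ _ ih₁ ih₂ =>
    obtain ⟨U₁, hU₁, hAU₁, hsub₁⟩ := ih₁ hAO.1
    obtain ⟨U₂, hU₂, hAU₂, hsub₂⟩ := ih₂ hAO.2
    refine ⟨U₁ ∩ U₂, hU₁.inter hU₂, hA.isPreirreducible _ _ hU₁ hU₂ hAU₁ hAU₂, fun F hF => ?_⟩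
    exact ⟨hsub₁ (hF.mono (inter_subset_inter_right _ inter_subset_left)),
      hsub₂ (hF.mono (inter_subset_inter_right _ inter_subset_right))⟩
  | sUnion 𝒪 _ ih =>
    obtain ⟨O, hO𝒪, hAO⟩ := hAO
    obtain ⟨U, hU, hAU, hsub⟩ := ih O hO𝒪 hAO
    exact ⟨U, hU, hAU, hsub.trans (subset_sUnion_of_mem hO𝒪)⟩

theorem IsIrreducible.mem_closure_lowerVietoris_iff {A : Set X} (hA : IsIrreducible A)
    {𝒮 : Set (Set X)} : A ∈ closure[lowerVietoris X] 𝒮 ↔ A ⊆ closure (⋃₀ 𝒮) := by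
  let := lowerVietoris X
  constructor
  · intro hA𝒮 x hxA
    refine mem_closure_iff.2 fun U hU hxU => ?_
    obtain ⟨B, hBU, hB𝒮⟩ := mem_closure_iff.1 hA𝒮 _
      (isOpen_lowerVietoris_setOf_inter_nonempty hU) ⟨x, hxA, hxU⟩
    obtain ⟨y, hyB, hyU⟩ := hBU
    exact ⟨y, hyU, B, hB𝒮, hyB⟩
  · intro hsub
    refine mem_closure_iff.2 fun O hO hAO => ?_
    obtain ⟨U, hU, ⟨x, hxA, hxU⟩, hUO⟩ := hA.exists_setOf_inter_nonempty_subset hO hAO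
    obtain ⟨y, hyU, B, hB𝒮, hyB⟩ := mem_closure_iff.1 (hsub hxA) U hU hxU
    exact ⟨B, hUO ⟨y, hyB, hyU⟩, hB𝒮⟩

namespace PrimeClosedEnv

theorem isIrreducible (A : PrimeClosedEnv X) : IsIrreducible A.val :=
  (isPrimeClosed_iff.1 A.2).2

theorem mem_closure_iff {A : PrimeClosedEnv X} {S : Set (PrimeClosedEnv X)} :
    A ∈ closure S ↔ A.val ⊆ closure (⋃ B ∈ S, B.val) := by
  refine (closure_induced (t := lowerVietoris X)).trans ?_
  rw [← sUnion_image]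
  exact A.isIrreducible.mem_closure_lowerVietoris_iff

theorem closure_singleton (A : PrimeClosedEnv X) :
    closure {A} = {B : PrimeClosedEnv X | B.val ⊆ A.val} := by
  ext B
  rw [mem_closure_iff, biUnion_singleton, (isPrimeClosed_iff.1 A.2).1.closure_eq]
  rfl

theorem isClosed_setOf_subset {C : Set X} (hC : IsClosed C) :
    IsClosed {A : PrimeClosedEnv X | A.val ⊆ C} := by
  refine closure_subset_iff_isClosed.1 fun A hA => ?_
  rw [mem_closure_iff] at hA
  exact hA.trans (closure_minimal (iUnion₂_subset fun B hB => hB) hC)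

theorem _root_.IsClosed.eq_setOf_subset_closure_biUnion {S : Set (PrimeClosedEnv X)}
    (hS : IsClosed S) : S = {A : PrimeClosedEnv X | A.val ⊆ closure (⋃ B ∈ S, B.val)} := by
  ext A
  have hA := mem_closure_iff (A := A) (S := S)
  rwa [hS.closure_eq] at hA

theorem _root_.IsIrreducible.biUnion_val {S : Set (PrimeClosedEnv X)} (hS : IsIrreducible S) :
    IsIrreducible (⋃ B ∈ S, B.val) := by
  obtain ⟨A, hA⟩ := hS.nonempty
  refine ⟨A.isIrreducible.nonempty.mono (subset_biUnion_of_mem hA), ?_⟩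
  rw [isPreirreducible_iff_isClosed_union_isClosed]
  intro F₁ F₂ h₁ h₂ hsub
  have hcover : S ⊆ {A | A.val ⊆ F₁} ∪ {A | A.val ⊆ F₂} := fun B hB =>
    (isPreirreducible_iff_isClosed_union_isClosed.1 B.isIrreducible.isPreirreducible F₁ F₂ h₁ h₂
      ((subset_biUnion_of_mem hB).trans hsub))
  refine ((isPreirreducible_iff_isClosed_union_isClosed.1 hS.isPreirreducible _ _
    (isClosed_setOf_subset h₁) (isClosed_setOf_subset h₂) hcover).imp ?_ ?_) <;>
    exact fun h => iUnion₂_subset fun B hB => h hB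

end PrimeClosedEnv

end

theorem env_pointComplete_general (X : Type*) [TopologicalSpace X]
    (S : Set (PrimeClosedEnv X)) (hS : IsPrimeClosed S) :
    ∃ p : PrimeClosedEnv X, S = closure {p} := by
  obtain ⟨hSclosed, hSirr⟩ := isPrimeClosed_iff.1 hS
  have hT : IsPrimeClosed (closure (⋃ B ∈ S, B.val)) :=
    isPrimeClosed_iff.2 ⟨isClosed_closure, hSirr.biUnion_val.closure⟩
  exact ⟨⟨_, hT⟩, hSclosed.eq_setOf_subset_closure_biUnion.trans
    (PrimeClosedEnv.closure_singleton ⟨_, hT⟩).symm⟩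

/-- For a `T0` space `X`, the envelope `X^c` is point-complete: every closed prime
subset of `X^c` is the closure of a singleton. -/
theorem env_pointComplete (X : Type*) [TopologicalSpace X] [T0Space X]
    (S : Set (PrimeClosedEnv X)) (hS : IsPrimeClosed S) :
    ∃ p : PrimeClosedEnv X, S = closure {p} :=
  env_pointComplete_general X S hS
end

section
/- Let X be a topological space. Every limit set of X is contained in a maximal limit set, and every maximal limit set is closed. -/
/-- `L` is a limit set if there is a net (equivalently, a proper filter) converging to
every point of `L`. -/
def IsLimitSet {X : Type*} [TopologicalSpace X] (L : Set X) : Prop :=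
  ∃ F : Filter X, F.NeBot ∧ ∀ x ∈ L, F ≤ nhds x

/-- A maximal limit set is a limit set not properly contained in any other limit set. -/
def IsMaxLimitSet {X : Type*} [TopologicalSpace X] (M : Set X) : Prop :=
  IsLimitSet M ∧ ∀ L : Set X, IsLimitSet L → M ⊆ L → L = M

/-- `ℳℒ(X)`: the space of maximal limit sets of `X`, with the subspace topology
inherited from the lower Vietoris topology. -/
def MLS (X : Type*) [TopologicalSpace X] : Type _ :=
  {M : Set X // IsMaxLimitSet M}

instance (X : Type*) [TopologicalSpace X] : TopologicalSpace (MLS X) :=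
  TopologicalSpace.induced Subtype.val (lowerVietoris X)

/-!
A limit set is a set of common limits of one proper filter, so for a limit set `L` the filter
`⨅ x ∈ L, 𝓝 x` is proper. Along a chain of limit sets these filters decrease, so the filter of the
union is proper too and Zorn's lemma applies. The set of all limits of a filter is closed and a
limit set, so a maximal limit set, being contained in the limits of its own filter, equals them.
-/

open Filter Set Topology

section

variable {X : Type*} [TopologicalSpace X]

theorem isLimitSet_iff_neBot_biInf_nhds {L : Set X} :
    IsLimitSet L ↔ (⨅ x ∈ L, 𝓝 x).NeBot :=
  ⟨fun ⟨_, hF, hle⟩ => hF.mono (le_iInf₂ hle), fun h => ⟨_, h, fun x hx => iInf₂_le x hx⟩⟩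

theorem isLimitSet_iUnion_of_directed {ι : Type*} [Nonempty ι] {L : ι → Set X}
    (hdir : Directed (· ⊆ ·) L) (hL : ∀ i, IsLimitSet (L i)) : IsLimitSet (⋃ i, L i) := by
  rw [isLimitSet_iff_neBot_biInf_nhds, iInf_iUnion]
  exact iInf_neBot_of_directed'
    (Directed.mono_comp (· ⊆ ·) (g := fun s : Set X => ⨅ x ∈ s, 𝓝 x) (fun _ _ => biInf_mono) hdir)
    fun i => isLimitSet_iff_neBot_biInf_nhds.mp (hL i)

theorem isLimitSet_sUnion_of_isChain {c : Set (Set X)} (hne : c.Nonempty)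
    (hchain : IsChain (· ⊆ ·) c) (hc : ∀ L ∈ c, IsLimitSet L) : IsLimitSet (⋃₀ c) := by
  have : Nonempty c := hne.to_subtype
  rw [sUnion_eq_iUnion]
  exact isLimitSet_iUnion_of_directed hchain.directedOn.directed_val fun L => hc L L.2

theorem isClosed_setOf_le_nhds (F : Filter X) : IsClosed {x | F ≤ 𝓝 x} := by
  refine isClosed_of_closure_subset fun y hy => (nhds_basis_opens y).ge_iff.mpr ?_
  rintro U ⟨hyU, hU⟩
  obtain ⟨z, hzU, hz⟩ := mem_closure_iff.mp hy U hU hyU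
  exact hz (hU.mem_nhds hzU)

theorem isLimitSet_setOf_le_nhds (F : Filter X) [F.NeBot] : IsLimitSet {x | F ≤ 𝓝 x} :=
  ⟨F, ‹_›, fun _ hx => hx⟩

theorem isMaxLimitSet_iff_maximal {M : Set X} : IsMaxLimitSet M ↔ Maximal IsLimitSet M :=
  and_congr_right fun _ => forall₂_congr fun _ _ =>
    ⟨fun h hML => (h hML).le, fun h hML => (h hML).antisymm hML⟩

theorem IsLimitSet.exists_isMaxLimitSet_superset {L : Set X} (hL : IsLimitSet L) :
    ∃ M, IsMaxLimitSet M ∧ L ⊆ M := by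
  obtain ⟨M, hLM, hM⟩ := zorn_subset_nonempty {L : Set X | IsLimitSet L}
    (fun c hc hchain hne => ⟨⋃₀ c, isLimitSet_sUnion_of_isChain hne hchain hc,
      fun _ => subset_sUnion_of_mem⟩) L hL
  exact ⟨M, isMaxLimitSet_iff_maximal.mpr hM, hLM⟩

theorem IsMaxLimitSet.isClosed {M : Set X} (hM : IsMaxLimitSet M) : IsClosed M := by
  obtain ⟨F, hF, hMF⟩ := hM.1
  rw [← hM.2 _ (isLimitSet_setOf_le_nhds F) hMF]
  exact isClosed_setOf_le_nhds F

end

/-- Every limit set is contained in a maximal limit set, and every maximal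
limit set is closed. -/
theorem limitSet_subset_max_and_max_closed (X : Type*) [TopologicalSpace X] :
    (∀ L : Set X, IsLimitSet L → ∃ M : Set X, IsMaxLimitSet M ∧ L ⊆ M) ∧
    (∀ M : Set X, IsMaxLimitSet M → IsClosed M) :=
  ⟨fun _ hL => hL.exists_isMaxLimitSet_superset, fun _ hM => hM.isClosed⟩
end

section
/- Let Y be a topological space, D a dense subset of Y, and L a limit set of Y. Then there exists a net with values in D that converges to every point of L; equivalently, the filter generated by D together with the infimum of the neighbourhood filters of the points of L is proper (non-degenerate). -/
/-!
A limit set `L` makes the filter `⨅ x ∈ L, 𝓝 x` proper. Every member of this filter contains an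
open member, a finite intersection of open neighbourhoods of points of `L`; being nonempty and
open, it meets the dense set `D`.
-/

open Filter Topology

section

variable {X : Type*} [TopologicalSpace X]

theorem IsLimitSet.neBot_biInf_nhds {L : Set X} (hL : IsLimitSet L) : (⨅ x ∈ L, 𝓝 x).NeBot :=
  let ⟨_, hF, hFL⟩ := hL
  hF.mono (le_iInf₂ hFL)

theorem interior_mem_iInf_nhds {ι : Type*} {x : ι → X} {s : Set X} (hs : s ∈ ⨅ i, 𝓝 (x i)) :
    interior s ∈ ⨅ i, 𝓝 (x i) := by
  have hbasis := HasBasis.iInf' fun i => nhds_basis_opens (x i)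
  obtain ⟨⟨I, U⟩, ⟨hI, hU⟩, hUs⟩ := hbasis.mem_iff.1 hs
  have hopen : IsOpen (⋂ i ∈ I, U i) := hI.isOpen_biInter fun i hi => (hU i hi).2
  exact mem_of_superset (hbasis.mem_of_mem ⟨hI, hU⟩) (hopen.subset_interior_iff.2 hUs)

theorem interior_mem_biInf_nhds {L s : Set X} (hs : s ∈ ⨅ x ∈ L, 𝓝 x) :
    interior s ∈ ⨅ x ∈ L, 𝓝 x := by
  rw [iInf_subtype'] at hs ⊢
  exact interior_mem_iInf_nhds hs

theorem Dense.inf_principal_neBot {l : Filter X} [l.NeBot] {D : Set X} (hD : Dense D)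
    (hl : ∀ s ∈ l, interior s ∈ l) : (l ⊓ 𝓟 D).NeBot :=
  inf_principal_neBot_iff.2 fun _ hs =>
    (hD.inter_open_nonempty _ isOpen_interior (nonempty_of_mem (hl _ hs))).mono
      (Set.inter_subset_inter_left _ interior_subset)

end

/-- If `D` is dense in `Y` and `L` is a limit set of `Y`, then there is a net with values
in `D` converging to every point of `L`; equivalently, the filter generated by `D`
together with the infimum of the neighbourhood filters of points of `L` is proper. -/
theorem limitSet_net_in_dense {Y : Type*} [TopologicalSpace Y] {D : Set Y} (hD : Dense D)
    {L : Set Y} (hL : IsLimitSet L) :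
    (∃ F : Filter Y, F.NeBot ∧ D ∈ F ∧ ∀ x ∈ L, F ≤ nhds x) ∧
    ((⨅ x ∈ L, nhds x) ⊓ Filter.principal D).NeBot := by
  have := hL.neBot_biInf_nhds
  have hneBot : ((⨅ x ∈ L, 𝓝 x) ⊓ 𝓟 D).NeBot :=
    hD.inf_principal_neBot fun _ => interior_mem_biInf_nhds
  refine ⟨⟨_, hneBot, mem_inf_of_right (mem_principal_self D), fun x hx => ?_⟩, hneBot⟩
  exact inf_le_left.trans (iInf₂_le x hx)
end

section
/- Let X₁, X₂, and Y be topological spaces and let φ be a homeomorphism of X₁ × X₂ onto a dense subset Z of Y. Suppose there is a continuous map ψ : Y → X₁ × X₂ such that ψ ∘ φ is the identity map of X₁ × X₂, and let M₁ and M₂ be maximal limit sets of X₁ and X₂ respectively such that ψ⁻¹(M₁ × M₂) equals the closure of φ(M₁ × M₂) in Y. Then ψ⁻¹(M₁ × M₂) is a maximal limit set of Y. -/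
/-!
`φ(M₁ × M₂)` is a limit set (product and continuous images of limit sets are limit sets), hence so
is its closure `ψ⁻¹(M₁ × M₂)`. For maximality, `M₁ × M₂` is maximal in `X₁ × X₂` (a larger limit
set projects onto limit sets containing, hence equal to, `M₁` and `M₂`), and the preimage of a
maximal limit set under a continuous surjection is maximal as soon as it is a limit set, because
its image under the surjection is the maximal set itself.
-/

section

open Filter Topology

variable {X Y : Type*} [TopologicalSpace X] [TopologicalSpace Y]

theorem IsLimitSet.image {L : Set X} (hL : IsLimitSet L) {f : X → Y} (hf : Continuous f) :
    IsLimitSet (f '' L) := by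
  obtain ⟨F, hF, hFL⟩ := hL
  refine ⟨map f F, hF.map f, ?_⟩
  rintro _ ⟨x, hx, rfl⟩
  exact (map_mono (hFL x hx)).trans (hf.tendsto x)

theorem IsLimitSet.closure {L : Set X} (hL : IsLimitSet L) : IsLimitSet (closure L) := by
  obtain ⟨F, hF, hFL⟩ := hL
  refine ⟨F, hF, fun y hy => (nhds_basis_opens y).ge_iff.2 fun U ⟨hyU, hU⟩ => ?_⟩
  obtain ⟨x, hxU, hxL⟩ := mem_closure_iff.1 hy U hU hyU
  exact hFL x hxL (hU.mem_nhds hxU)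

theorem IsLimitSet.prod {L₁ : Set X} {L₂ : Set Y} (h₁ : IsLimitSet L₁) (h₂ : IsLimitSet L₂) :
    IsLimitSet (L₁ ×ˢ L₂) := by
  obtain ⟨F₁, hF₁, hF₁L⟩ := h₁
  obtain ⟨F₂, hF₂, hF₂L⟩ := h₂
  refine ⟨F₁ ×ˢ F₂, hF₁.prod hF₂, fun p hp => ?_⟩
  rw [nhds_prod_eq]
  exact prod_mono (hF₁L p.1 hp.1) (hF₂L p.2 hp.2)

theorem IsMaxLimitSet.nonempty {M : Set X} (hM : IsMaxLimitSet M) : M.Nonempty := by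
  obtain ⟨⟨F, hF, -⟩, hmax⟩ := hM
  obtain ⟨x⟩ := hF.nonempty
  have hx : IsLimitSet {x} := ⟨𝓝 x, inferInstance, fun y hy => hy ▸ le_rfl⟩
  refine Set.nonempty_iff_ne_empty.2 fun hempty => Set.singleton_ne_empty x ?_
  exact hempty ▸ hmax {x} hx (hempty ▸ Set.empty_subset _)

theorem IsMaxLimitSet.prod {M₁ : Set X} {M₂ : Set Y} (h₁ : IsMaxLimitSet M₁)
    (h₂ : IsMaxLimitSet M₂) : IsMaxLimitSet (M₁ ×ˢ M₂) := by
  refine ⟨h₁.1.prod h₂.1, fun L hL hsub => Set.Subset.antisymm ?_ hsub⟩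
  obtain ⟨m₁, hm₁⟩ := h₁.nonempty
  obtain ⟨m₂, hm₂⟩ := h₂.nonempty
  have hfst : Prod.fst '' L = M₁ :=
    h₁.2 _ (hL.image continuous_fst) fun x hx => ⟨(x, m₂), hsub ⟨hx, hm₂⟩, rfl⟩
  have hsnd : Prod.snd '' L = M₂ :=
    h₂.2 _ (hL.image continuous_snd) fun y hy => ⟨(m₁, y), hsub ⟨hm₁, hy⟩, rfl⟩
  exact fun p hp => ⟨hfst ▸ ⟨p, hp, rfl⟩, hsnd ▸ ⟨p, hp, rfl⟩⟩

theorem IsMaxLimitSet.preimage {M : Set X} (hM : IsMaxLimitSet M) {f : Y → X}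
    (hf : Continuous f) (hsurj : Function.Surjective f) (hlim : IsLimitSet (f ⁻¹' M)) :
    IsMaxLimitSet (f ⁻¹' M) := by
  refine ⟨hlim, fun L hL hsub => Set.Subset.antisymm ?_ hsub⟩
  have himage : f '' L = M :=
    hM.2 _ (hL.image hf) ((Set.image_preimage_eq M hsurj).symm.subset.trans
      (Set.image_mono hsub))
  exact himage ▸ Set.subset_preimage_image f L

end

theorem preimage_prod_isMaxLimitSet_general {X₁ X₂ Y : Type*} [TopologicalSpace X₁]
    [TopologicalSpace X₂] [TopologicalSpace Y] (φ : X₁ × X₂ → Y)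
    (hφ : Topology.IsEmbedding φ)
    (ψ : Y → X₁ × X₂) (hψ : Continuous ψ) (hretr : ψ ∘ φ = id)
    {M₁ : Set X₁} {M₂ : Set X₂} (hM₁ : IsMaxLimitSet M₁) (hM₂ : IsMaxLimitSet M₂)
    (hcl : ψ ⁻¹' (M₁ ×ˢ M₂) = closure (φ '' (M₁ ×ˢ M₂))) :
    IsMaxLimitSet (ψ ⁻¹' (M₁ ×ˢ M₂)) := by
  have hsurj : Function.Surjective ψ :=
    Function.LeftInverse.surjective (congrFun hretr)
  have hlim : IsLimitSet (ψ ⁻¹' (M₁ ×ˢ M₂)) :=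
    hcl ▸ ((hM₁.1.prod hM₂.1).image hφ.continuous).closure
  exact (hM₁.prod hM₂).preimage hψ hsurj hlim

/-- If `φ` is a homeomorphism of `X₁ × X₂` onto a dense subset of `Y`, `ψ` a continuous
retraction, and `M₁`, `M₂` are maximal limit sets with
`ψ⁻¹(M₁ × M₂) = closure (φ(M₁ × M₂))`, then `ψ⁻¹(M₁ × M₂)` is a maximal limit set of `Y`. -/
theorem preimage_prod_isMaxLimitSet {X₁ X₂ Y : Type*} [TopologicalSpace X₁]
    [TopologicalSpace X₂] [TopologicalSpace Y] (φ : X₁ × X₂ → Y)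
    (hφ : Topology.IsEmbedding φ) (hdense : DenseRange φ)
    (ψ : Y → X₁ × X₂) (hψ : Continuous ψ) (hretr : ψ ∘ φ = id)
    {M₁ : Set X₁} {M₂ : Set X₂} (hM₁ : IsMaxLimitSet M₁) (hM₂ : IsMaxLimitSet M₂)
    (hcl : ψ ⁻¹' (M₁ ×ˢ M₂) = closure (φ '' (M₁ ×ˢ M₂))) :
    IsMaxLimitSet (ψ ⁻¹' (M₁ ×ˢ M₂)) :=
  preimage_prod_isMaxLimitSet_general φ hφ ψ hψ hretr hM₁ hM₂ hcl
end

section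
/- Let X₁, X₂, and Y be topological spaces and let φ be a homeomorphism of X₁ × X₂ onto a dense subset Z of Y. Suppose there is a continuous map ψ : Y → X₁ × X₂ such that ψ ∘ φ is the identity map of X₁ × X₂, and such that for each pair (M₁, M₂) of maximal limit sets of X₁ and X₂, ψ⁻¹(M₁ × M₂) equals the closure of φ(M₁ × M₂) in Y. Then the map Θ(M₁, M₂) := ψ⁻¹(M₁ × M₂) from ℳℒ(X₁) × ℳℒ(X₂) to ℱ(Y) is continuous: for every open subset U of Y, the set {(M₁, M₂) ∈ ℳℒ(X₁) × ℳℒ(X₂) : ψ⁻¹(M₁ × M₂) ∩ U ≠ ∅} is open in ℳℒ(X₁) × ℳℒ(X₂). -/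
lemma MLS.isOpen_setOf_inter_nonempty {X : Type*} [TopologicalSpace X] {V : Set X}
    (hV : IsOpen V) : IsOpen {M : MLS X | (M.1 ∩ V).Nonempty} :=
  ⟨{F : Set X | (F ∩ V).Nonempty}, TopologicalSpace.GenerateOpen.basic _ ⟨V, hV, rfl⟩, rfl⟩

lemma MLS.isOpen_setOf_prod_inter_nonempty {X₁ X₂ : Type*} [TopologicalSpace X₁]
    [TopologicalSpace X₂] {W : Set (X₁ × X₂)} (hW : IsOpen W) :
    IsOpen {p : MLS X₁ × MLS X₂ | ((p.1.1 ×ˢ p.2.1) ∩ W).Nonempty} := by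
  refine isOpen_iff_forall_mem_open.2 ?_
  rintro p ⟨⟨x₁, x₂⟩, ⟨hx₁, hx₂⟩, hxW⟩
  obtain ⟨V₁, V₂, hV₁, hV₂, hx₁V, hx₂V, hbox⟩ := isOpen_prod_iff.1 hW x₁ x₂ hxW
  refine ⟨{q | (q.1.1 ∩ V₁).Nonempty ∧ (q.2.1 ∩ V₂).Nonempty}, ?_, ?_,
    ⟨x₁, hx₁, hx₁V⟩, ⟨x₂, hx₂, hx₂V⟩⟩
  · rintro q ⟨⟨y₁, hy₁, hy₁V⟩, ⟨y₂, hy₂, hy₂V⟩⟩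
    exact ⟨(y₁, y₂), ⟨hy₁, hy₂⟩, hbox ⟨hy₁V, hy₂V⟩⟩
  · exact ((MLS.isOpen_setOf_inter_nonempty hV₁).preimage continuous_fst).inter
      ((MLS.isOpen_setOf_inter_nonempty hV₂).preimage continuous_snd)

theorem theta_continuous_general {X₁ X₂ Y : Type*} [TopologicalSpace X₁]
    [TopologicalSpace X₂] [TopologicalSpace Y] (φ : X₁ × X₂ → Y)
    (hφ : Topology.IsEmbedding φ)
    (ψ : Y → X₁ × X₂)
    (hcl : ∀ (M₁ : Set X₁) (M₂ : Set X₂), IsMaxLimitSet M₁ → IsMaxLimitSet M₂ →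
      ψ ⁻¹' (M₁ ×ˢ M₂) = closure (φ '' (M₁ ×ˢ M₂)))
    {U : Set Y} (hU : IsOpen U) :
    IsOpen {p : MLS X₁ × MLS X₂ | ((ψ ⁻¹' (p.1.1 ×ˢ p.2.1)) ∩ U).Nonempty} := by
  convert MLS.isOpen_setOf_prod_inter_nonempty (hU.preimage hφ.continuous) using 3 with p
  rw [hcl _ _ p.1.2 p.2.2, closure_inter_open_nonempty_iff hU, Set.image_inter_nonempty_iff]

/-- Under the hypotheses of the retraction lemma, the map
`Θ(M₁, M₂) = ψ⁻¹(M₁ × M₂)` is continuous: for every open `U ⊆ Y` the set of pairs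
`(M₁, M₂)` with `ψ⁻¹(M₁ × M₂) ∩ U ≠ ∅` is open in `ℳℒ(X₁) × ℳℒ(X₂)`. -/
theorem theta_continuous {X₁ X₂ Y : Type*} [TopologicalSpace X₁]
    [TopologicalSpace X₂] [TopologicalSpace Y] (φ : X₁ × X₂ → Y)
    (hφ : Topology.IsEmbedding φ) (hdense : DenseRange φ)
    (ψ : Y → X₁ × X₂) (hψ : Continuous ψ) (hretr : ψ ∘ φ = id)
    (hcl : ∀ (M₁ : Set X₁) (M₂ : Set X₂), IsMaxLimitSet M₁ → IsMaxLimitSet M₂ →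
      ψ ⁻¹' (M₁ ×ˢ M₂) = closure (φ '' (M₁ ×ˢ M₂)))
    {U : Set Y} (hU : IsOpen U) :
    IsOpen {p : MLS X₁ × MLS X₂ | ((ψ ⁻¹' (p.1.1 ×ˢ p.2.1)) ∩ U).Nonempty} :=
  theta_continuous_general φ hφ ψ hcl hU
end

section
/- There exist topological spaces X₁, X₂, and Y, a homeomorphism φ of X₁ × X₂ onto a dense subset of Y, a continuous map ψ : Y → X₁ × X₂ with ψ ∘ φ equal to the identity of X₁ × X₂, and maximal limit sets M₁ ⊆ X₁ and M₂ ⊆ X₂ such that ψ⁻¹(M₁ × M₂) is not equal to the closure of φ(M₁ × M₂) in Y. (For instance, one may take X₁ = X₂ = [0,1] with the usual topology, Y = ([0,1] × [0,1]) ∪ {y} for an extra point y, with topology generated by the open sets of the square together with all sets (U \ {(1,1)}) ∪ {y} for U an open neighbourhood of (1,1); φ the inclusion of the square; ψ the identity on the square and ψ(y) = (1,1); and M₁ = M₂ = {1}, for which closure(φ(M₁ × M₂)) = {(1,1)} while ψ⁻¹(M₁ × M₂) = {(1,1), y}.) -/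
open Filter Topology Set

theorem isMaxLimitSet_singleton {X : Type*} [TopologicalSpace X] [T2Space X] (x : X) :
    IsMaxLimitSet ({x} : Set X) := by
  refine ⟨⟨pure x, pure_neBot, fun y hy => hy ▸ pure_le_nhds y⟩, ?_⟩
  rintro L ⟨F, hF, hFL⟩ hxL
  refine subset_antisymm (fun y hy => ?_) hxL
  exact tendsto_nhds_unique (f := id) (hFL y hy) (hFL x (hxL rfl))

/-- `X` with the point `a` doubled: the new point `twin` (encoded as `none`) has as
neighbourhoods the sets `{twin} ∪ U` with `U` a punctured neighbourhood of `a`. -/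
def DoubledPoint (X : Type*) (_a : X) : Type _ := Option X

namespace DoubledPoint

variable {X : Type*} {a : X}

def embed (x : X) : DoubledPoint X a := some x

def twin : DoubledPoint X a := none

def collapse (y : DoubledPoint X a) : X := Option.getD y a

@[simp]
theorem collapse_embed (x : X) : collapse (embed x : DoubledPoint X a) = x := rfl

@[simp]
theorem collapse_twin : collapse (twin : DoubledPoint X a) = a := rfl

theorem embed_injective : Function.Injective (embed : X → DoubledPoint X a) :=
  Option.some_injective X

theorem twin_ne_embed (x : X) : (twin : DoubledPoint X a) ≠ embed x := nofun

variable [TopologicalSpace X]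

instance : TopologicalSpace (DoubledPoint X a) where
  IsOpen S := IsOpen (embed ⁻¹' S) ∧ (twin ∈ S → embed ⁻¹' S ∈ 𝓝[≠] a)
  isOpen_univ := ⟨isOpen_univ, fun _ => univ_mem⟩
  isOpen_inter S T hS hT := ⟨hS.1.inter hT.1, fun h => inter_mem (hS.2 h.1) (hT.2 h.2)⟩
  isOpen_sUnion c hc := by
    refine ⟨?_, ?_⟩
    · rw [preimage_sUnion]
      exact isOpen_biUnion fun S hS => (hc S hS).1
    · rintro ⟨S, hSc, hS⟩
      exact mem_of_superset ((hc S hSc).2 hS) fun x hx => ⟨S, hSc, hx⟩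

theorem continuous_embed : Continuous (embed : X → DoubledPoint X a) :=
  continuous_def.mpr fun _ hS => hS.1

theorem continuous_collapse : Continuous (collapse : DoubledPoint X a → X) :=
  continuous_def.mpr fun _ hU => ⟨hU, fun ha => mem_nhdsWithin_of_mem_nhds (hU.mem_nhds ha)⟩

theorem isEmbedding_embed : IsEmbedding (embed : X → DoubledPoint X a) :=
  Function.LeftInverse.isEmbedding (f := collapse) collapse_embed continuous_collapse
    continuous_embed

theorem denseRange_embed [(𝓝[≠] a).NeBot] : DenseRange (embed : X → DoubledPoint X a) := by
  refine dense_iff_inter_open.mpr fun S hS ⟨y, hy⟩ => ?_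
  cases y with
  | some x => exact ⟨some x, hy, x, rfl⟩
  | none =>
    obtain ⟨x, hx⟩ := Filter.nonempty_of_mem (hS.2 hy)
    exact ⟨some x, hx, x, rfl⟩

theorem isOpen_compl_singleton_embed [T1Space X] :
    IsOpen ({embed a}ᶜ : Set (DoubledPoint X a)) := by
  have hpre : embed ⁻¹' ({embed a}ᶜ : Set (DoubledPoint X a)) = {a}ᶜ := by
    ext x
    simp [embed_injective.eq_iff]
  exact ⟨hpre ▸ isOpen_compl_singleton, fun _ => hpre ▸ self_mem_nhdsWithin⟩

theorem twin_notMem_closure_embed [T1Space X] :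
    (twin : DoubledPoint X a) ∉ closure {embed a} := by
  rw [mem_closure_iff]
  push Not
  exact ⟨_, isOpen_compl_singleton_embed, twin_ne_embed a, by simp⟩

end DoubledPoint

open DoubledPoint in
/-- There exist spaces `X₁`, `X₂`, `Y`, a homeomorphism `φ` of `X₁ × X₂` onto a dense
subset of `Y`, a continuous retraction `ψ` with `ψ ∘ φ = id`, and maximal limit sets
`M₁`, `M₂` with `ψ⁻¹(M₁ × M₂) ≠ closure (φ(M₁ × M₂))`. -/
theorem exists_counterexample :
    ∃ (X₁ X₂ Y : Type) (t₁ : TopologicalSpace X₁) (t₂ : TopologicalSpace X₂)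
      (tY : TopologicalSpace Y) (φ : X₁ × X₂ → Y) (ψ : Y → X₁ × X₂)
      (M₁ : Set X₁) (M₂ : Set X₂),
      @Topology.IsEmbedding _ _ (@instTopologicalSpaceProd _ _ t₁ t₂) tY φ ∧
      @DenseRange _ tY _ φ ∧
      @Continuous _ _ tY (@instTopologicalSpaceProd _ _ t₁ t₂) ψ ∧
      ψ ∘ φ = id ∧
      @IsMaxLimitSet _ t₁ M₁ ∧ @IsMaxLimitSet _ t₂ M₂ ∧
      ψ ⁻¹' (M₁ ×ˢ M₂) ≠ @closure _ tY (φ '' (M₁ ×ˢ M₂)) := by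
  refine ⟨ℝ, ℝ, DoubledPoint (ℝ × ℝ) (0, 0), _, _, _, embed, collapse, {0}, {0},
    isEmbedding_embed, denseRange_embed, continuous_collapse, rfl,
    isMaxLimitSet_singleton 0, isMaxLimitSet_singleton 0, fun h => ?_⟩
  have htwin : (twin : DoubledPoint (ℝ × ℝ) (0, 0)) ∈ collapse ⁻¹' ({0} ×ˢ {0}) := by simp
  rw [h, singleton_prod_singleton, image_singleton] at htwin
  exact twin_notMem_closure_embed htwin
end
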